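/- Let I be a fixed (2r+1)×(2r+1) subimage with k black and h white pixels. If n^2 p(n)^k (1−p(n))^h → +∞ as n → ∞, then the probability that I appears (centered at some pixel) in the n×n random image of level p(n) tends to 1. -/

import Mathlib

/-!
Tile the torus by `m² = ⌊n / (2r+1)⌋²` disjoint windows of side `2r+1`. Under the product
measure the events "`I` appears in window `t`" are independent, each of probability
`w = p^k (1-p)^h`, so `I` misses all of them with probability `(1 - w)^(m²) ≤ exp (-w m²)`,
and `w m² ≥ w n² / (2(2r+1))² → ∞`.
-/

/-- The probability, under the i.i.d. pixel model on the n×n torus where each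
pixel is black (`true`) with probability p, of a set A of images. -/
noncomputable def imgProb (n : ℕ) [NeZero n] (p : ℝ)
    (A : Set ((ZMod n × ZMod n) → Bool)) : ℝ :=
  ∑ η : (ZMod n × ZMod n) → Bool,
    A.indicator (fun η => ∏ x : ZMod n × ZMod n, if η x then p else 1 - p) η

/-- The (2r+1)×(2r+1) subimage I appears centered at pixel x in the image η on
the n×n torus (periodic boundary). -/
def occursAt (n r : ℕ) (I : Fin (2 * r + 1) × Fin (2 * r + 1) → Bool)
    (η : ZMod n × ZMod n → Bool) (x : ZMod n × ZMod n) : Prop :=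
  ∀ a : Fin (2 * r + 1) × Fin (2 * r + 1),
    η (x.1 + (a.1.1 : ZMod n) - (r : ZMod n),
       x.2 + (a.2.1 : ZMod n) - (r : ZMod n)) = I a

open Finset Filter Topology

section Bernoulli

variable {α β ι : Type*} [Fintype α] [Fintype β] [Fintype ι] (p : ℝ)

def bernProd (η : α → Bool) : ℝ := ∏ x, if η x then p else 1 - p

noncomputable def bernProb [DecidableEq α] (A : Set (α → Bool)) : ℝ :=
  ∑ η, A.indicator (bernProd p) η

variable {p}

lemma bernProd_nonneg (hp : p ∈ Set.Icc (0 : ℝ) 1) (η : α → Bool) : 0 ≤ bernProd p η :=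
  prod_nonneg fun x _ => by split <;> linarith [hp.1, hp.2]

lemma bernProd_le_one (hp : p ∈ Set.Icc (0 : ℝ) 1) (η : α → Bool) : bernProd p η ≤ 1 :=
  prod_le_one (fun x _ => by split <;> linarith [hp.1, hp.2])
    fun x _ => by split <;> linarith [hp.1, hp.2]

lemma bernProd_sum_elim (ζ : α → Bool) (ξ : β → Bool) :
    bernProd p (Sum.elim ζ ξ) = bernProd p ζ * bernProd p ξ :=
  Fintype.prod_sum_type _

lemma bernProd_comp_equiv (e : β ≃ α) (η : α → Bool) :
    bernProd p (η ∘ e) = bernProd p η :=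
  e.prod_comp fun x => if η x then p else 1 - p

lemma bernProd_eq_pow_mul_pow (I : α → Bool) {k h : ℕ}
    (hk : (univ.filter fun a => I a = true).card = k)
    (hh : (univ.filter fun a => I a = false).card = h) :
    bernProd p I = p ^ k * (1 - p) ^ h := by
  simp only [bernProd, prod_ite, prod_const, hk, Bool.not_eq_true, hh]

variable [DecidableEq α] [DecidableEq β] [DecidableEq ι]

variable (p) in
lemma sum_bernProd : ∑ η : α → Bool, bernProd p η = 1 := by
  unfold bernProd
  rw [← Fintype.prod_sum fun (_ : α) (b : Bool) => if b = true then p else 1 - p]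
  simp

/-- The law of `η ∘ Φ` under the product measure is again the product measure. -/
lemma sum_mul_bernProd_comp_of_injective {Φ : β → α} (hΦ : Function.Injective Φ)
    (g : (β → Bool) → ℝ) :
    ∑ η : α → Bool, g (η ∘ Φ) * bernProd p η
      = ∑ ζ : β → Bool, g ζ * bernProd p ζ := by
  classical
  let e : β ⊕ ↥(Set.range Φ)ᶜ ≃ α :=
    ((Equiv.ofInjective Φ hΦ).sumCongr (Equiv.refl _)).trans (Equiv.Set.sumCompl _)
  let F : (β → Bool) × (↥(Set.range Φ)ᶜ → Bool) ≃ (α → Bool) :=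
    (Equiv.sumArrowEquivProdArrow _ _ _).symm.trans (e.arrowCongr (Equiv.refl _))
  have hF : ∀ ζξ, F ζξ = Sum.elim ζξ.1 ζξ.2 ∘ e.symm := fun _ => rfl
  have he : ∀ b, e.symm (Φ b) = Sum.inl b := fun b => e.symm_apply_eq.2 rfl
  rw [← F.sum_comp, Fintype.sum_prod_type]
  refine sum_congr rfl fun ζ _ => ?_
  have hterm : ∀ ξ, g (F (ζ, ξ) ∘ Φ) * bernProd p (F (ζ, ξ))
      = g ζ * bernProd p ζ * bernProd p ξ := fun ξ => by
    rw [show F (ζ, ξ) ∘ Φ = ζ from funext fun b => by simp [hF, he], hF,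
      bernProd_comp_equiv, bernProd_sum_elim, mul_assoc]
  simp only [hterm, ← mul_sum, sum_bernProd, mul_one]

lemma sum_prod_mul_bernProd_curry (G : ι → (β → Bool) → ℝ) :
    ∑ ζ : ι × β → Bool, (∏ t, G t fun b => ζ (t, b)) * bernProd p ζ
      = ∏ t, ∑ ξ : β → Bool, G t ξ * bernProd p ξ := by
  rw [Fintype.prod_sum, ← (Equiv.curry ι β Bool).sum_comp]
  refine Fintype.sum_congr _ _ fun ζ => ?_
  rw [bernProd, Fintype.prod_prod_type, ← prod_mul_distrib]
  rfl

lemma sum_ne_mul_bernProd (I : β → Bool) :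
    ∑ ξ : β → Bool, (if ξ ≠ I then 1 else 0) * bernProd p ξ = 1 - bernProd p I := by
  simp only [boole_mul, ← sum_filter, filter_ne', sum_erase_eq_sub (mem_univ I), sum_bernProd]

lemma bernProb_forall_window_ne {Φ : ι × β → α} (hΦ : Function.Injective Φ)
    (I : β → Bool) :
    bernProb p {η | ∀ t, (fun b => η (Φ (t, b))) ≠ I}
      = (1 - bernProd p I) ^ Fintype.card ι := by
  have hind : ∀ η : α → Bool,
      {η | ∀ t, (fun b => η (Φ (t, b))) ≠ I}.indicator (bernProd p) η
        = (∏ t, if (fun b => (η ∘ Φ) (t, b)) ≠ I then 1 else 0) * bernProd p η := by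
    intro η
    simp only [Set.indicator_apply, Set.mem_ofPred_eq, prod_boole, mem_univ, true_implies,
      boole_mul, Function.comp_apply]
  simp only [bernProb, hind]
  rw [sum_mul_bernProd_comp_of_injective hΦ
      (fun ζ => ∏ t, if (fun b => ζ (t, b)) ≠ I then 1 else 0),
    sum_prod_mul_bernProd_curry fun _ ξ => if ξ ≠ I then 1 else 0, sum_ne_mul_bernProd,
    prod_const, card_univ]

lemma bernProb_add_bernProb_compl (A : Set (α → Bool)) :
    bernProb p A + bernProb p Aᶜ = 1 := by
  simp only [bernProb, ← sum_add_distrib, Set.indicator_self_add_compl_apply, sum_bernProd]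

lemma bernProb_mono (hp : p ∈ Set.Icc (0 : ℝ) 1) {A B : Set (α → Bool)} (hAB : A ⊆ B) :
    bernProb p A ≤ bernProb p B :=
  sum_le_sum fun η _ => Set.indicator_le_indicator_of_subset hAB (bernProd_nonneg hp) η

lemma bernProb_le_one (hp : p ∈ Set.Icc (0 : ℝ) 1) (A : Set (α → Bool)) :
    bernProb p A ≤ 1 := by
  rw [← sum_bernProd (α := α) p]
  exact sum_le_sum fun η _ => Set.indicator_le_self' (fun _ _ => bernProd_nonneg hp _) η

end Bernoulli

lemma imgProb_eq_bernProb (n : ℕ) [NeZero n] (p : ℝ) (A : Set ((ZMod n × ZMod n) → Bool)) :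
    imgProb n p A = bernProb p A := rfl

/-- `finProdFinEquiv (i, a) = a + s * i`: pixel `a` of the `i`-th of consecutive blocks of
length `s`. -/
def blockPixel (s m n : ℕ) (ia : Fin m × Fin s) : ZMod n := ((finProdFinEquiv ia : ℕ) : ZMod n)

lemma blockPixel_injective {s m n : ℕ} (h : m * s ≤ n) :
    Function.Injective (blockPixel s m n) := by
  intro x y hxy
  have hlt : ∀ z : Fin m × Fin s, (finProdFinEquiv z : ℕ) < n :=
    fun z => (finProdFinEquiv z).2.trans_le h
  have hval := congrArg ZMod.val hxy
  rw [blockPixel, blockPixel, ZMod.val_cast_of_lt (hlt x), ZMod.val_cast_of_lt (hlt y)] at hval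
  exact finProdFinEquiv.injective (Fin.ext hval)

/-- Pixel `a` of window `t`, the windows tiling an `m(2r+1)`-square of the torus. -/
def windowPixel (r m n : ℕ) :
    (Fin m × Fin m) × (Fin (2 * r + 1) × Fin (2 * r + 1)) → ZMod n × ZMod n :=
  Prod.map (blockPixel (2 * r + 1) m n) (blockPixel (2 * r + 1) m n) ∘
    Equiv.prodProdProdComm _ _ _ _

lemma windowPixel_injective {r m n : ℕ} (h : m * (2 * r + 1) ≤ n) :
    Function.Injective (windowPixel r m n) :=
  ((blockPixel_injective h).prodMap (blockPixel_injective h)).comp (Equiv.injective _)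

def windowCenter (r m n : ℕ) (t : Fin m × Fin m) : ZMod n × ZMod n :=
  windowPixel r m n (t, (⟨r, by omega⟩, ⟨r, by omega⟩))

lemma occursAt_windowCenter_iff {r m n : ℕ} (I : Fin (2 * r + 1) × Fin (2 * r + 1) → Bool)
    (η : ZMod n × ZMod n → Bool) (t : Fin m × Fin m) :
    occursAt n r I η (windowCenter r m n t) ↔ (fun a => η (windowPixel r m n (t, a))) = I := by
  rw [funext_iff]
  refine forall_congr' fun a => ?_
  simp only [windowCenter, windowPixel, blockPixel, Function.comp_apply, Prod.map,
    Equiv.prodProdProdComm_apply, finProdFinEquiv_apply_val]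
  push_cast
  ring_nf

lemma imgProb_exists_occursAt_ge {n : ℕ} [NeZero n] {p : ℝ} (hp : p ∈ Set.Icc (0 : ℝ) 1)
    {r m : ℕ} (h : m * (2 * r + 1) ≤ n) (I : Fin (2 * r + 1) × Fin (2 * r + 1) → Bool) :
    1 - (1 - bernProd p I) ^ (m * m) ≤ imgProb n p {η | ∃ x, occursAt n r I η x} := by
  have hsub : {η | ∀ t, (fun a => η (windowPixel r m n (t, a))) ≠ I}ᶜ
      ⊆ {η | ∃ x, occursAt n r I η x} := fun η hη => by
    obtain ⟨t, ht⟩ := not_forall_not.1 hη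
    exact ⟨_, (occursAt_windowCenter_iff I η t).2 ht⟩
  have hcompl := bernProb_add_bernProb_compl (p := p)
    {η | ∀ t, (fun a => η (windowPixel r m n (t, a))) ≠ I}
  rw [bernProb_forall_window_ne (windowPixel_injective h), Fintype.card_prod,
    Fintype.card_fin] at hcompl
  rw [imgProb_eq_bernProb]
  linarith [bernProb_mono hp hsub]

lemma tendsto_one_sub_pow_nhds_zero {q : ℕ → ℝ} {M : ℕ → ℕ} (hq : ∀ n, q n ≤ 1)
    (hqM : Tendsto (fun n => q n * M n) atTop atTop) :
    Tendsto (fun n => (1 - q n) ^ M n) atTop (𝓝 0) := by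
  have hexp : Tendsto (fun n => Real.exp (-(q n * M n))) atTop (𝓝 0) :=
    Real.tendsto_exp_atBot.comp (tendsto_neg_atTop_atBot.comp hqM)
  refine squeeze_zero (fun n => pow_nonneg (sub_nonneg.2 (hq n)) _) (fun n => ?_) hexp
  calc (1 - q n) ^ M n ≤ Real.exp (-q n) ^ M n :=
        pow_le_pow_left₀ (sub_nonneg.2 (hq n)) (Real.one_sub_le_exp_neg _) _
    _ = Real.exp (-(q n * M n)) := by rw [← Real.exp_nat_mul]; ring_nf

/-- For `n ≥ s`, `n ≤ 2 s ⌊n / s⌋`. -/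
lemma tendsto_mul_div_mul_div_atTop {q : ℕ → ℝ} (hq : ∀ n, 0 ≤ q n) {s : ℕ} (hs : 0 < s)
    (h : Tendsto (fun n : ℕ => (n : ℝ) ^ 2 * q n) atTop atTop) :
    Tendsto (fun n => q n * ((n / s * (n / s) : ℕ) : ℝ)) atTop atTop := by
  refine tendsto_atTop_mono' _ ?_
    (h.const_mul_atTop (by positivity : (0 : ℝ) < ((2 * s : ℝ) ^ 2)⁻¹))
  filter_upwards [eventually_ge_atTop s] with n hn
  have hn_le : n ≤ 2 * s * (n / s) := by
    have h1 : 1 ≤ n / s := (Nat.one_le_div_iff hs).2 hn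
    nlinarith [Nat.lt_mul_div_succ n hs]
  have hn_le' : (n : ℝ) ≤ 2 * s * (n / s : ℕ) := by exact_mod_cast hn_le
  have hs' : (0 : ℝ) < s := by exact_mod_cast hs
  rw [inv_mul_le_iff₀ (by positivity)]
  calc (n : ℝ) ^ 2 * q n ≤ (2 * s * (n / s : ℕ)) ^ 2 * q n :=
        mul_le_mul_of_nonneg_right (pow_le_pow_left₀ (by positivity) hn_le' 2) (hq n)
    _ = (2 * s : ℝ) ^ 2 * (q n * ((n / s * (n / s) : ℕ) : ℝ)) := by push_cast; ring

/-- If n² p(n)ᵏ (1−p(n))ʰ → ∞ then the probability that a fixed (2r+1)×(2r+1)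
subimage with k black and h white pixels appears somewhere tends to 1. -/
theorem stmt4 (r k h : ℕ)
    (I : Fin (2 * r + 1) × Fin (2 * r + 1) → Bool)
    (hk : (Finset.univ.filter (fun a => I a = true)).card = k)
    (hh : (Finset.univ.filter (fun a => I a = false)).card = h)
    (p : ℕ → ℝ) (hp : ∀ n, p n ∈ Set.Icc (0 : ℝ) 1)
    (hlim : Filter.Tendsto (fun n : ℕ => (n : ℝ) ^ 2 * p n ^ k * (1 - p n) ^ h)
      Filter.atTop Filter.atTop) :
    Filter.Tendsto
      (fun n : ℕ => imgProb (n + 1) (p (n + 1)) {η | ∃ x, occursAt (n + 1) r I η x})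
      Filter.atTop (nhds 1) := by
  set m : ℕ → ℕ := fun n => (n + 1) / (2 * r + 1)
  have hlim' : Tendsto (fun n : ℕ => (n : ℝ) ^ 2 * bernProd (p n) I) atTop atTop := by
    simpa only [bernProd_eq_pow_mul_pow I hk hh, mul_assoc] using hlim
  have hgrowth : Tendsto (fun n => bernProd (p (n + 1)) I * (m n * m n : ℕ)) atTop atTop :=
    (tendsto_mul_div_mul_div_atTop (fun n => bernProd_nonneg (hp n) I) (by omega) hlim').comp
      (tendsto_add_atTop_nat 1)
  have hmiss := tendsto_one_sub_pow_nhds_zero (fun n => bernProd_le_one (hp (n + 1)) I) hgrowth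
  refine tendsto_of_tendsto_of_tendsto_of_le_of_le (by simpa using hmiss.const_sub 1)
    tendsto_const_nhds (fun n => ?_) fun n => bernProb_le_one (hp (n + 1)) _
  exact imgProb_exists_occursAt_ge (hp (n + 1)) (Nat.div_mul_le_self _ _) I
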